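/- arXiv:1601.02880 — 2 statements merged into one kernel-verified Lean document; each statement's English description precedes it below -/
import Mathlib

section
/- If a Hamiltonian cubic bipartite graph with symmetry factor b has girth g, then b ≥ g/4 − 1/2, i.e., 4b + 2 ≥ g. -/
open SimpleGraph

/-- A walk along the Hamiltonian cycle, going `k` steps upward from `x`. -/
def walkUp {n : ℕ} {G : SimpleGraph (ZMod n)} (hcyc : ∀ i : ZMod n, G.Adj i (i + 1)) :
    (x : ZMod n) → (k : ℕ) → G.Walk x (x + (k : ZMod n))
  | _, 0 => Walk.nil.copy rfl (by simp)
  | x, k + 1 =>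
      (Walk.cons (hcyc x) (walkUp hcyc (x + 1) k)).copy rfl (by push_cast; ring)

lemma walkUp_length {n : ℕ} {G : SimpleGraph (ZMod n)} (hcyc : ∀ i : ZMod n, G.Adj i (i + 1))
    (x : ZMod n) (k : ℕ) : (walkUp hcyc x k).length = k := by
  induction k generalizing x with
  | zero => simp [walkUp]
  | succ k ih => simp [walkUp, ih]

lemma walkUp_edges {n : ℕ} {G : SimpleGraph (ZMod n)} (hcyc : ∀ i : ZMod n, G.Adj i (i + 1))
    (x : ZMod n) (k : ℕ) {e : Sym2 (ZMod n)} (he : e ∈ (walkUp hcyc x k).edges) :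
    ∃ j : ℕ, j < k ∧ e = s(x + (j : ZMod n), x + ((j + 1 : ℕ) : ZMod n)) := by
  induction k generalizing x with
  | zero => simp [walkUp] at he
  | succ k ih =>
    simp only [walkUp, Walk.edges_copy, Walk.edges_cons, List.mem_cons] at he
    rcases he with he | he
    · exact ⟨0, by omega, by simpa using he⟩
    · obtain ⟨j, hj, hje⟩ := ih (x + 1) he
      refine ⟨j + 1, by omega, ?_⟩
      rw [hje]
      congr 1 <;> push_cast <;> ring

lemma egirth_le_of_walk {V : Type*} [DecidableEq V] {G : SimpleGraph V} {x y : V}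
    (W : G.Walk x y) (h : G.Adj y x) (he : s(y, x) ∉ W.edges) :
    G.egirth ≤ ((W.length + 1 : ℕ) : ℕ∞) := by
  have hep : s(y, x) ∉ W.bypass.edges := fun hmem => he (W.edges_bypass_subset hmem)
  have hc : (Walk.cons h W.bypass).IsCycle :=
    Path.cons_isCycle ⟨W.bypass, W.bypass_isPath⟩ h hep
  have h1 : G.egirth ≤ ((Walk.cons h W.bypass).length : ℕ∞) := by
    rw [egirth]
    exact iInf_le_of_le y (iInf_le_of_le _ (iInf_le _ hc))
  refine h1.trans ?_
  rw [Walk.length_cons]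
  exact_mod_cast Nat.succ_le_succ (W.length_bypass_le)

/-- If a Hamiltonian cubic bipartite graph with symmetry factor `b` has girth `g`,
then `4b + 2 ≥ g`, i.e. the girth is at most `4b+2`.  The graph has vertices `ZMod (2*m)` with the
Hamiltonian cycle `i → i+1`, and the chord neighbour function `u` is periodic with period `2b`. -/
theorem stmt1 (m b : ℕ) (hm : 0 < m) (hb : 0 < b) (hbm : b ∣ m)
    (G : SimpleGraph (ZMod (2 * m)))
    (u : ZMod (2 * m) → ZMod (2 * m))
    (hcyc : ∀ i : ZMod (2 * m), G.Adj i (i + 1))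
    (hchord : ∀ i : ZMod (2 * m), G.Adj i (u i))
    (hnotcyc : ∀ i : ZMod (2 * m), u i ≠ i + 1 ∧ u i ≠ i - 1)
    (hper : ∀ i : ZMod (2 * m),
      u (i + ((2 * b : ℕ) : ZMod (2 * m))) = u i + ((2 * b : ℕ) : ZMod (2 * m))) :
    G.egirth ≤ (4 * b + 2 : ℕ) := by
  haveI : NeZero (2 * m) := ⟨by omega⟩
  set a := u 0 with ha
  have hav : a.val < 2 * m := ZMod.val_lt a
  have hcast0 : ∀ j : ℕ, j < 2 * m → (j : ZMod (2 * m)) = 0 → j = 0 := by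
    intro j hj h0
    have := (ZMod.natCast_eq_zero_iff j (2 * m)).mp h0
    rcases Nat.eq_zero_or_pos j with h | h
    · exact h
    · have := Nat.le_of_dvd h this; omega
  have hadj0 : G.Adj a 0 := (hchord 0).symm
  rcases le_or_gt a.val (4 * b + 1) with hle | hgt
  · -- short chord: go up from 0 to a along the cycle, close with the chord
    have hend : (0 : ZMod (2 * m)) + ((a.val : ℕ) : ZMod (2 * m)) = a := by
      rw [zero_add, ZMod.natCast_val, ZMod.cast_id]
    set W : G.Walk 0 a := (walkUp hcyc 0 a.val).copy rfl hend with hW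
    have hnotmem : s(a, 0) ∉ W.edges := by
      intro hmem
      rw [hW, Walk.edges_copy] at hmem
      obtain ⟨j, hj, hje⟩ := walkUp_edges hcyc 0 a.val hmem
      rw [zero_add, zero_add] at hje
      rcases Sym2.eq_iff.mp hje with ⟨h1, h2⟩ | ⟨h1, h2⟩
      · have : j + 1 = 0 := hcast0 _ (by omega) h2.symm
        omega
      · have : j = 0 := hcast0 _ (by omega) h2.symm
        subst this
        exact (hnotcyc 0).1 (by simpa using h1)
    have := egirth_le_of_walk W hadj0 hnotmem
    refine this.trans ?_
    have : W.length = a.val := by rw [hW, Walk.length_copy, walkUp_length]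
    rw [this]
    exact_mod_cast (by omega : a.val + 1 ≤ 4 * b + 2)
  · -- long chord: use the rotational symmetry cycle of length 4b+2
    have hblt : b < m := by
      have hble : b ≤ m := Nat.le_of_dvd hm hbm
      rcases Nat.lt_or_ge b m with h | h
      · exact h
      · exfalso; have : b = m := le_antisymm hble h; omega
    set t : ZMod (2 * m) := ((2 * b : ℕ) : ZMod (2 * m)) with ht
    have htv : t.val = 2 * b := ZMod.val_cast_of_lt (by omega)
    have hut : u t = a + t := by
      have := hper 0
      rwa [zero_add] at this
    have hadjt : G.Adj t (a + t) := hut ▸ hchord t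
    set W1 : G.Walk 0 t := (walkUp hcyc 0 (2 * b)).copy rfl (zero_add t) with hW1
    set W2 : G.Walk (a + t) a := (walkUp hcyc a (2 * b)).reverse with hW2
    set W : G.Walk 0 a := W1.append (Walk.cons hadjt W2) with hW
    have hnotmem : s(a, 0) ∉ W.edges := by
      intro hmem
      rw [hW, Walk.edges_append, List.mem_append] at hmem
      rcases hmem with hmem | hmem
      · rw [hW1, Walk.edges_copy] at hmem
        obtain ⟨j, hj, hje⟩ := walkUp_edges hcyc 0 (2 * b) hmem
        rw [zero_add, zero_add] at hje
        rcases Sym2.eq_iff.mp hje with ⟨h1, h2⟩ | ⟨h1, h2⟩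
        · have : j + 1 = 0 := hcast0 _ (by omega) h2.symm
          omega
        · have : j = 0 := hcast0 _ (by omega) h2.symm
          subst this
          exact (hnotcyc 0).1 (by simpa using h1)
      · rw [Walk.edges_cons, List.mem_cons] at hmem
        rcases hmem with hmem | hmem
        · rcases Sym2.eq_iff.mp hmem with ⟨h1, h2⟩ | ⟨h1, h2⟩
          · have h3 := htv
            rw [← h1] at h3
            omega
          · have h3 : (2 * b : ℕ) = 0 := by rw [← htv, ← h2, ZMod.val_zero]
            omega
        · rw [hW2, Walk.edges_reverse, List.mem_reverse] at hmem
          obtain ⟨j, hj, hje⟩ := walkUp_edges hcyc a (2 * b) hmem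
          rcases Sym2.eq_iff.mp hje with ⟨h1, h2⟩ | ⟨h1, h2⟩
          · have hj0 : (j : ZMod (2 * m)) = 0 := by
              have := h1.symm
              rwa [add_eq_left] at this
            have : j = 0 := hcast0 _ (by omega) hj0
            subst this
            norm_num at h2
            exact (hnotcyc 0).2 (eq_sub_of_add_eq h2.symm)
          · have hj0 : ((j + 1 : ℕ) : ZMod (2 * m)) = 0 := by
              have := h1.symm
              rwa [add_eq_left] at this
            have : j + 1 = 0 := hcast0 _ (by omega) hj0
            omega
    have := egirth_le_of_walk W hadj0 hnotmem
    refine this.trans ?_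
    have hlen : W.length = 4 * b + 1 := by
      rw [hW, Walk.length_append, Walk.length_cons, hW1, hW2, Walk.length_copy,
        Walk.length_reverse, walkUp_length, walkUp_length]
      omega
    have hfin : W.length + 1 ≤ 4 * b + 2 := by omega
    exact_mod_cast hfin
end

section
/- For every m ≥ 7, the graph on 2m vertices labeled 0,…,2m−1 with edges {i, i+1 mod 2m} and {2j, 2j+5 mod 2m} for all j = 0,…,m−1, has girth exactly 6. In particular, (3,6) Hamiltonian bipartite graphs exist for all even orders at least 14. -/
/-- The D3 chord-index-5 graph on `2m` vertices: a cycle `i ~ i+1` together with chords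
`i ~ i+5` from every even vertex. -/
def d3Five (m : ℕ) : SimpleGraph (ZMod (2 * m)) :=
  SimpleGraph.fromRel (fun i j => j = i + 1 ∨ (Even i ∧ j = i + 5))

/-- The parity homomorphism `ZMod (2m) → ZMod 2`. -/
noncomputable def d3Phi (m : ℕ) : ZMod (2 * m) →+* ZMod 2 :=
  ZMod.castHom ⟨m, rfl⟩ (ZMod 2)

lemma d3Phi_even (m : ℕ) {x : ZMod (2 * m)} (h : Even x) : d3Phi m x = 0 := by
  obtain ⟨r, hr⟩ := h
  rw [hr, map_add]
  exact CharTwo.add_self_eq_zero _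

/-- Every edge of `d3Five m` is a step by `±1` or `±5`, where `+5` starts at an even vertex
and `-5` ends at an even vertex. -/
lemma d3Five_step (m : ℕ) {x y : ZMod (2 * m)} (h : (d3Five m).Adj x y) :
    ∃ d : ℤ, (d = 1 ∨ d = -1 ∨ d = 5 ∨ d = -5) ∧ y = x + (d : ZMod (2 * m)) ∧
      (d = 5 → Even x) ∧ (d = -5 → Even y) := by
  rw [d3Five, SimpleGraph.fromRel_adj] at h
  rcases h.2 with (h1 | ⟨he, h1⟩) | (h1 | ⟨he, h1⟩)
  · exact ⟨1, Or.inl rfl, by rw [h1]; norm_num, by norm_num, by norm_num⟩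
  · exact ⟨5, by norm_num, by rw [h1]; norm_num, fun _ => he, by norm_num⟩
  · exact ⟨-1, by norm_num, by rw [h1]; push_cast; ring, by norm_num, by norm_num⟩
  · exact ⟨-5, by norm_num, by rw [h1]; push_cast; ring, by norm_num, fun _ => he⟩

/-- Every edge changes parity: the graph is bipartite. -/
lemma d3Five_par (m : ℕ) {x y : ZMod (2 * m)} (h : (d3Five m).Adj x y) :
    d3Phi m y = d3Phi m x + 1 := by
  obtain ⟨d, hd, hy, -, -⟩ := d3Five_step m h
  subst hy
  rw [map_add, map_intCast]
  rcases hd with rfl | rfl | rfl | rfl <;> norm_num <;> decide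

lemma d3Five_walk_par (m : ℕ) : ∀ {u v : ZMod (2 * m)} (w : (d3Five m).Walk u v),
    d3Phi m v = d3Phi m u + (w.length : ZMod 2) := by
  intro u v w
  induction w with
  | nil => simp
  | cons h p ih =>
    rw [SimpleGraph.Walk.length_cons]
    push_cast
    rw [ih, d3Five_par m h]
    ring

/-- Every closed walk has even length. -/
lemma d3Five_even_len (m : ℕ) (v : ZMod (2 * m)) (w : (d3Five m).Walk v v) : 2 ∣ w.length := by
  have h := d3Five_walk_par m w
  rw [left_eq_add] at h
  exact (ZMod.natCast_eq_zero_iff _ _).mp h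

/-- Integer case analysis for ruling out 4-cycles. -/
lemma d3Five_keyInt (d1 d2 d3 d4 : ℤ)
    (h1 : d1 = 1 ∨ d1 = -1 ∨ d1 = 5 ∨ d1 = -5)
    (h2 : d2 = 1 ∨ d2 = -1 ∨ d2 = 5 ∨ d2 = -5)
    (h3 : d3 = 1 ∨ d3 = -1 ∨ d3 = 5 ∨ d3 = -5)
    (h4 : d4 = 1 ∨ d4 = -1 ∨ d4 = 5 ∨ d4 = -5)
    (q1 : d1 + d2 ≠ 0) (q2 : d2 + d3 ≠ 0)
    (hp : (d1 ≠ -5 ∧ d2 ≠ 5 ∧ d3 ≠ -5 ∧ d4 ≠ 5) ∨ (d1 ≠ 5 ∧ d2 ≠ -5 ∧ d3 ≠ 5 ∧ d4 ≠ -5))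
    (hs : d1 + d2 + d3 + d4 = 0 ∨ d1 + d2 + d3 + d4 ≤ -14 ∨ 14 ≤ d1 + d2 + d3 + d4) :
    False := by
  omega

/-- There are no 4-cycles. -/
lemma d3Five_no4 (m : ℕ) (hm : 7 ≤ m) (v : ZMod (2 * m)) (w : (d3Five m).Walk v v)
    (hc : w.IsCycle) : w.length ≠ 4 := by
  intro hl
  cases w with
  | nil => simp only [SimpleGraph.Walk.length_cons, SimpleGraph.Walk.length_nil] at hl; omega
  | cons h1 p1 =>
  cases p1 with
  | nil => simp only [SimpleGraph.Walk.length_cons, SimpleGraph.Walk.length_nil] at hl; omega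
  | cons h2 p2 =>
  cases p2 with
  | nil => simp only [SimpleGraph.Walk.length_cons, SimpleGraph.Walk.length_nil] at hl; omega
  | cons h3 p3 =>
  cases p3 with
  | nil => simp only [SimpleGraph.Walk.length_cons, SimpleGraph.Walk.length_nil] at hl; omega
  | cons h4 p4 =>
  cases p4 with
  | cons h5 p5 =>
    simp only [SimpleGraph.Walk.length_cons] at hl; omega
  | nil =>
  rename_i a b c
  have hnd := hc.2
  simp only [SimpleGraph.Walk.support_cons, SimpleGraph.Walk.support_nil, List.tail_cons,
    List.nodup_cons, List.mem_cons, List.mem_singleton, List.not_mem_nil, List.nodup_nil] at hnd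
  have hvb : v ≠ b := fun h => hnd.2.1 (Or.inr (Or.inl h.symm))
  have hac : a ≠ c := fun h => hnd.1 (Or.inr (Or.inl h))
  obtain ⟨d1, hd1, e1, f1, g1⟩ := d3Five_step m h1
  obtain ⟨d2, hd2, e2, f2, g2⟩ := d3Five_step m h2
  obtain ⟨d3, hd3, e3, f3, g3⟩ := d3Five_step m h3
  obtain ⟨d4, hd4, e4, f4, g4⟩ := d3Five_step m h4
  have hs0 : ((d1 + d2 + d3 + d4 : ℤ) : ZMod (2 * m)) = 0 := by
    push_cast
    linear_combination -e1 - e2 - e3 - e4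
  rw [ZMod.intCast_zmod_eq_zero_iff_dvd] at hs0
  have hs : d1 + d2 + d3 + d4 = 0 ∨ d1 + d2 + d3 + d4 ≤ -14 ∨ 14 ≤ d1 + d2 + d3 + d4 := by
    rcases eq_or_ne (d1 + d2 + d3 + d4) 0 with h | h
    · exact Or.inl h
    · have hle := Int.le_of_dvd (abs_pos.mpr h) ((dvd_abs _ _).mpr hs0)
      have h14 : (14 : ℤ) ≤ ((2 * m : ℕ) : ℤ) := by exact_mod_cast (by omega : 14 ≤ 2 * m)
      rcases abs_cases (d1 + d2 + d3 + d4) with ⟨he, _⟩ | ⟨he, _⟩ <;> rw [he] at hle <;> omega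
  have q1 : d1 + d2 ≠ 0 := by
    intro h0
    apply hvb
    have hz : ((d1 : ℤ) : ZMod (2 * m)) + ((d2 : ℤ) : ZMod (2 * m)) = 0 := by
      have := congrArg (fun t : ℤ => (t : ZMod (2 * m))) h0
      push_cast at this
      exact this
    rw [e2, e1, add_assoc, hz, add_zero]
  have q2 : d2 + d3 ≠ 0 := by
    intro h0
    apply hac
    have hz : ((d2 : ℤ) : ZMod (2 * m)) + ((d3 : ℤ) : ZMod (2 * m)) = 0 := by
      have := congrArg (fun t : ℤ => (t : ZMod (2 * m))) h0
      push_cast at this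
      exact this
    rw [e3, e2, add_assoc, hz, add_zero]
  have pa := d3Five_par m h1
  have pb := d3Five_par m h2
  have pc := d3Five_par m h3
  have P1 : d1 = 5 → d3Phi m v = 0 := fun h => d3Phi_even m (f1 h)
  have P1' : d1 = -5 → d3Phi m a = 0 := fun h => d3Phi_even m (g1 h)
  have P2 : d2 = 5 → d3Phi m a = 0 := fun h => d3Phi_even m (f2 h)
  have P2' : d2 = -5 → d3Phi m b = 0 := fun h => d3Phi_even m (g2 h)
  have P3 : d3 = 5 → d3Phi m b = 0 := fun h => d3Phi_even m (f3 h)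
  have P3' : d3 = -5 → d3Phi m c = 0 := fun h => d3Phi_even m (g3 h)
  have P4 : d4 = 5 → d3Phi m c = 0 := fun h => d3Phi_even m (f4 h)
  have P4' : d4 = -5 → d3Phi m v = 0 := fun h => d3Phi_even m (g4 h)
  have htwo : ∀ t : ZMod 2, t = 0 ∨ t = 1 := by decide
  rcases htwo (d3Phi m v) with hv | hv
  · have ha' : d3Phi m a = 1 := by rw [pa, hv]; decide
    have hc' : d3Phi m c = 1 := by rw [pc, pb, pa, hv]; decide
    refine d3Five_keyInt d1 d2 d3 d4 hd1 hd2 hd3 hd4 q1 q2 (Or.inl ⟨?_, ?_, ?_, ?_⟩) hs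
    · intro h; rw [P1' h] at ha'; exact absurd ha' (by decide)
    · intro h; rw [P2 h] at ha'; exact absurd ha' (by decide)
    · intro h; rw [P3' h] at hc'; exact absurd hc' (by decide)
    · intro h; rw [P4 h] at hc'; exact absurd hc' (by decide)
  · have hb' : d3Phi m b = 1 := by rw [pb, pa, hv]; decide
    refine d3Five_keyInt d1 d2 d3 d4 hd1 hd2 hd3 hd4 q1 q2 (Or.inr ⟨?_, ?_, ?_, ?_⟩) hs
    · intro h; rw [P1 h] at hv; exact absurd hv (by decide)
    · intro h; rw [P2' h] at hb'; exact absurd hb' (by decide)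
    · intro h; rw [P3 h] at hb'; exact absurd hb' (by decide)
    · intro h; rw [P4' h] at hv; exact absurd hv (by decide)

/-- for every `m ≥ 7`, the D3 chord-index-5 graph on `2m` vertices has girth
exactly `6`.  In particular, `(3,6)` Hamiltonian bipartite graphs exist for all even orders
at least `14`. -/
theorem stmt4 (m : ℕ) (hm : 7 ≤ m) : (d3Five m).egirth = 6 := by
  -- distinctness of small numerals in `ZMod (2*m)`
  have hne : ∀ a b : ℕ, a < 14 → b < 14 → a ≠ b → ((a : ZMod (2 * m)) ≠ (b : ZMod (2 * m))) := by
    intro a b ha hb hab h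
    apply hab
    rw [← ZMod.val_cast_of_lt (show a < 2 * m by omega), h,
      ZMod.val_cast_of_lt (show b < 2 * m by omega)]
  have hne' : ∀ a b : ZMod (2 * m), ∀ a' b' : ℕ, a = (a' : ZMod (2 * m)) →
      b = (b' : ZMod (2 * m)) → a' < 14 → b' < 14 → a' ≠ b' → a ≠ b := by
    rintro a b a' b' rfl rfl ha hb hab
    exact hne a' b' ha hb hab
  have n01 : (0 : ZMod (2*m)) ≠ 1 := hne' _ _ 0 1 (by norm_num) (by norm_num) (by norm_num) (by norm_num) (by norm_num)
  have n02 : (0 : ZMod (2*m)) ≠ 2 := hne' _ _ 0 2 (by norm_num) (by norm_num) (by norm_num) (by norm_num) (by norm_num)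
  have n03 : (0 : ZMod (2*m)) ≠ 3 := hne' _ _ 0 3 (by norm_num) (by norm_num) (by norm_num) (by norm_num) (by norm_num)
  have n04 : (0 : ZMod (2*m)) ≠ 4 := hne' _ _ 0 4 (by norm_num) (by norm_num) (by norm_num) (by norm_num) (by norm_num)
  have n05 : (0 : ZMod (2*m)) ≠ 5 := hne' _ _ 0 5 (by norm_num) (by norm_num) (by norm_num) (by norm_num) (by norm_num)
  have n12 : (1 : ZMod (2*m)) ≠ 2 := hne' _ _ 1 2 (by norm_num) (by norm_num) (by norm_num) (by norm_num) (by norm_num)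
  have n13 : (1 : ZMod (2*m)) ≠ 3 := hne' _ _ 1 3 (by norm_num) (by norm_num) (by norm_num) (by norm_num) (by norm_num)
  have n14 : (1 : ZMod (2*m)) ≠ 4 := hne' _ _ 1 4 (by norm_num) (by norm_num) (by norm_num) (by norm_num) (by norm_num)
  have n15 : (1 : ZMod (2*m)) ≠ 5 := hne' _ _ 1 5 (by norm_num) (by norm_num) (by norm_num) (by norm_num) (by norm_num)
  have n23 : (2 : ZMod (2*m)) ≠ 3 := hne' _ _ 2 3 (by norm_num) (by norm_num) (by norm_num) (by norm_num) (by norm_num)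
  have n24 : (2 : ZMod (2*m)) ≠ 4 := hne' _ _ 2 4 (by norm_num) (by norm_num) (by norm_num) (by norm_num) (by norm_num)
  have n25 : (2 : ZMod (2*m)) ≠ 5 := hne' _ _ 2 5 (by norm_num) (by norm_num) (by norm_num) (by norm_num) (by norm_num)
  have n34 : (3 : ZMod (2*m)) ≠ 4 := hne' _ _ 3 4 (by norm_num) (by norm_num) (by norm_num) (by norm_num) (by norm_num)
  have n35 : (3 : ZMod (2*m)) ≠ 5 := hne' _ _ 3 5 (by norm_num) (by norm_num) (by norm_num) (by norm_num) (by norm_num)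
  have n45 : (4 : ZMod (2*m)) ≠ 5 := hne' _ _ 4 5 (by norm_num) (by norm_num) (by norm_num) (by norm_num) (by norm_num)
  -- the explicit 6-cycle 0-1-2-3-4-5-0
  have a01 : (d3Five m).Adj 0 1 := by
    rw [d3Five, SimpleGraph.fromRel_adj]
    exact ⟨n01, Or.inl (Or.inl (by norm_num))⟩
  have a12 : (d3Five m).Adj 1 2 := by
    rw [d3Five, SimpleGraph.fromRel_adj]
    exact ⟨n12, Or.inl (Or.inl (by norm_num))⟩
  have a23 : (d3Five m).Adj 2 3 := by
    rw [d3Five, SimpleGraph.fromRel_adj]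
    exact ⟨n23, Or.inl (Or.inl (by norm_num))⟩
  have a34 : (d3Five m).Adj 3 4 := by
    rw [d3Five, SimpleGraph.fromRel_adj]
    exact ⟨n34, Or.inl (Or.inl (by norm_num))⟩
  have a45 : (d3Five m).Adj 4 5 := by
    rw [d3Five, SimpleGraph.fromRel_adj]
    exact ⟨n45, Or.inl (Or.inl (by norm_num))⟩
  have a50 : (d3Five m).Adj 5 0 := by
    rw [d3Five, SimpleGraph.fromRel_adj]
    exact ⟨fun h => n05 h.symm, Or.inr (Or.inr ⟨Even.zero, by norm_num⟩)⟩
  let w : (d3Five m).Walk 0 0 :=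
    .cons a01 (.cons a12 (.cons a23 (.cons a34 (.cons a45 (.cons a50 .nil)))))
  have hlen : w.length = 6 := rfl
  have hcyc : w.IsCycle := by
    show (SimpleGraph.Walk.cons a01
      (.cons a12 (.cons a23 (.cons a34 (.cons a45 (.cons a50 .nil)))))).IsCycle
    rw [SimpleGraph.Walk.cons_isCycle_iff]
    constructor
    · rw [SimpleGraph.Walk.isPath_def]
      simp only [SimpleGraph.Walk.support_cons, SimpleGraph.Walk.support_nil]
      simp only [List.nodup_cons, List.mem_cons, List.not_mem_nil, List.nodup_nil]
      tauto
    · simp only [SimpleGraph.Walk.edges_cons, SimpleGraph.Walk.edges_nil, List.mem_cons,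
        List.not_mem_nil, Sym2.eq, Sym2.rel_iff', Prod.mk.injEq, Prod.swap_prod_mk]
      push_neg
      tauto
  apply le_antisymm
  · have hle : (d3Five m).egirth ≤ (w.length : ℕ∞) := by
      unfold SimpleGraph.egirth
      exact iInf_le_of_le 0 (iInf_le_of_le w (iInf_le _ hcyc))
    rw [hlen] at hle
    exact_mod_cast hle
  · refine SimpleGraph.le_egirth.mpr ?_
    intro a w' hw'
    have h3 := hw'.three_le_length
    have heven := d3Five_even_len m a w'
    have h4 := d3Five_no4 m hm a w' hw'
    exact_mod_cast (show 6 ≤ w'.length by omega)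
end
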